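/- The equation y² + 23·z² = 5·(x⁴ + 805) has a solution (x,y,z) ∈ ℝ³ and a solution (x,y,z) ∈ (ℚ_p)³ for every prime p ≠ 23, but it has no solution (x,y,z) ∈ (ℚ_23)³ (and hence no solution in ℚ³). -/

import Mathlib

instance : Fact (Nat.Prime 23) := ⟨by norm_num⟩

section Aux

lemma toZMod_eq_zero_iff' {p : ℕ} [Fact p.Prime] (x : ℤ_[p]) :
    PadicInt.toZMod x = 0 ↔ (p : ℤ_[p]) ∣ x := by
  rw [← RingHom.mem_ker, PadicInt.ker_toZMod, PadicInt.maximalIdeal_eq_span_p,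
    Ideal.mem_span_singleton]

lemma norm_eq_one_of_toZMod' {p : ℕ} [Fact p.Prime] (x : ℤ_[p]) (h : PadicInt.toZMod x ≠ 0) :
    ‖x‖ = 1 := by
  rcases lt_or_eq_of_le (PadicInt.norm_le_one x) with h1 | h1
  · exact absurd ((toZMod_eq_zero_iff' x).mpr ((PadicInt.norm_lt_one_iff_dvd x).mp h1)) h
  · exact h1

open Polynomial in
lemma sq_lift' {p : ℕ} [Fact p.Prime] (hp2 : p ≠ 2) (u : ℤ_[p]) (s : ZMod p) (hs : s ≠ 0)
    (hsu : s ^ 2 = PadicInt.toZMod u) : ∃ r : ℤ_[p], r ^ 2 = u := by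
  set a : ℤ_[p] := ((s.val : ℕ) : ℤ_[p]) with ha
  have hta : PadicInt.toZMod a = s := by
    rw [ha, map_natCast, ZMod.natCast_rightInverse s]
  set F : Polynomial ℤ_[p] := X ^ 2 - C u with hF
  have hFa : F.eval a = a ^ 2 - u := by simp [hF]
  have hF' : F.derivative.eval a = 2 * a := by
    simp [hF, one_add_one_eq_two]
  have hnorm1 : ‖F.eval a‖ < 1 := by
    rw [hFa, PadicInt.norm_lt_one_iff_dvd, ← toZMod_eq_zero_iff']
    simp [map_pow, hta, hsu]
  have hnorm2 : ‖F.derivative.eval a‖ = 1 := by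
    rw [hF']
    apply norm_eq_one_of_toZMod'
    rw [map_mul, hta]
    have h2 : (PadicInt.toZMod (2 : ℤ_[p]) : ZMod p) ≠ 0 := by
      rw [map_ofNat]
      have : ((2 : ℕ) : ZMod p) ≠ 0 := by
        rw [Ne, ZMod.natCast_eq_zero_iff]
        intro h
        exact hp2 ((Nat.prime_dvd_prime_iff_eq (Fact.out : p.Prime) Nat.prime_two).mp h)
      simpa using this
    exact mul_ne_zero h2 hs
  have := hensels_lemma (F := F) (a := a) (by simp only [Polynomial.coe_aeval_eq_eval]; rw [hnorm2]; simpa using hnorm1)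
  obtain ⟨r, hr, -⟩ := this
  refine ⟨r, ?_⟩
  have : r ^ 2 - u = 0 := by simpa [hF] using hr
  linear_combination this

open Polynomial in
lemma rep_unit' {p : ℕ} [Fact p.Prime] (hp2 : p ≠ 2) (hp23 : p ≠ 23) (c : ℤ_[p])
    (hc : PadicInt.toZMod c ≠ 0) : ∃ y z : ℤ_[p], y ^ 2 + 23 * z ^ 2 = c := by
  have hp : p.Prime := Fact.out
  have h23 : ((23 : ℕ) : ZMod p) ≠ 0 := by
    rw [Ne, ZMod.natCast_eq_zero_iff]
    intro h
    exact hp23 ((Nat.prime_dvd_prime_iff_eq hp (by norm_num)).mp h)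
  have h23' : (23 : ZMod p) ≠ 0 := by simpa using h23
  set cb := PadicInt.toZMod c with hcb
  obtain ⟨a, b, hab⟩ := FiniteField.exists_root_sum_quadratic
      (f := (X : (ZMod p)[X]) ^ 2 - C cb) (g := C (23 : ZMod p) * X ^ 2)
      (degree_X_pow_sub_C (by norm_num) _) (degree_C_mul_X_pow 2 h23')
      (by rw [ZMod.card]; exact Nat.odd_iff.mp (hp.odd_of_ne_two hp2))
  have hab' : a ^ 2 + 23 * b ^ 2 = cb := by
    have := hab
    simp only [eval_add, eval_sub, eval_pow, eval_X, eval_C, eval_mul] at this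
    linear_combination this
  by_cases hA : a ≠ 0
  · set z : ℤ_[p] := ((b.val : ℕ) : ℤ_[p]) with hz
    have htz : PadicInt.toZMod z = b := by rw [hz, map_natCast, ZMod.natCast_rightInverse b]
    obtain ⟨r, hr⟩ := sq_lift' hp2 (c - 23 * z ^ 2) a hA (by
      rw [map_sub, map_mul, map_pow, htz, map_ofNat, ← hcb]
      linear_combination hab')
    exact ⟨r, z, by linear_combination hr⟩
  · push_neg at hA
    have hb : b ≠ 0 := by
      intro hb; apply hc; rw [← hcb] at *; rw [hA, hb] at hab'; simpa using hab'.symm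
    have hu23 : IsUnit (23 : ℤ_[p]) := by
      rw [PadicInt.isUnit_iff]
      apply norm_eq_one_of_toZMod'
      rw [map_ofNat]; exact h23'
    obtain ⟨w, hw⟩ := hu23.exists_right_inv
    obtain ⟨r, hr⟩ := sq_lift' hp2 (w * c) b hb (by
      have hw' : PadicInt.toZMod (23 : ℤ_[p]) * PadicInt.toZMod w = 1 := by
        rw [← map_mul, hw, map_one]
      rw [map_mul, ← hcb]
      rw [map_ofNat] at hw'
      calc b ^ 2 = 1 * b ^ 2 := by ring
        _ = (23 * PadicInt.toZMod w) * b ^ 2 := by rw [hw']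
        _ = PadicInt.toZMod w * (a ^ 2 + 23 * b ^ 2) := by rw [hA]; ring
        _ = PadicInt.toZMod w * cb := by rw [hab'])
    refine ⟨0, r, ?_⟩
    linear_combination 23 * hr + c * hw

lemma zmod23_L1 : ∀ a b : ZMod 23, a ^ 2 = 5 * b ^ 4 → a = 0 ∧ b = 0 := by decide
lemma zmod23_L2 : ∀ a : ZMod 23, a ^ 2 ≠ 175 := by decide

lemma dvd23' {x : ℤ_[23]} (h : PadicInt.toZMod x = 0) : ∃ c, x = 23 * c := by
  have := (toZMod_eq_zero_iff' x).mp h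
  rwa [Nat.cast_ofNat] at this

lemma descent23 : ∀ m : ℕ, ∀ X Y Z : ℤ_[23],
    Y ^ 2 + 23 * Z ^ 2 = 5 * X ^ 4 + 4025 * 23 ^ (4 * m) → False := by
  have h23 : (23 : ℤ_[23]) ≠ 0 := by
    have : ((23 : ℕ) : ℤ_[23]) ≠ 0 := Nat.cast_ne_zero.mpr (by norm_num)
    simpa using this
  intro m
  induction m with
  | zero =>
    intro X Y Z heq
    rw [mul_zero, pow_zero, mul_one] at heq
    have i1 := congrArg PadicInt.toZMod heq
    simp only [map_add, map_mul, map_pow, map_ofNat,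
      show (23 : ZMod 23) = 0 by decide, show (4025 : ZMod 23) = 0 by decide,
      zero_mul, mul_zero, add_zero, zero_add] at i1
    obtain ⟨hY0, hX0⟩ := zmod23_L1 _ _ i1
    obtain ⟨Y₁, hY⟩ := dvd23' hY0
    obtain ⟨X₁, hX⟩ := dvd23' hX0
    subst hY hX
    have e2 : 23 * Y₁ ^ 2 + Z ^ 2 = 60835 * X₁ ^ 4 + 175 :=
      mul_left_cancel₀ h23 (by linear_combination heq)
    have i2 := congrArg PadicInt.toZMod e2
    simp only [map_add, map_mul, map_pow, map_ofNat,
      show (23 : ZMod 23) = 0 by decide, show (60835 : ZMod 23) = 0 by decide,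
      zero_mul, mul_zero, add_zero, zero_add] at i2
    exact zmod23_L2 _ i2
  | succ m ih =>
    intro X Y Z heq
    have ht : (23 : ℤ_[23]) ^ (4 * (m + 1)) = 23 ^ (4 * m) * 279841 := by ring
    rw [ht] at heq
    set t : ℤ_[23] := 23 ^ (4 * m) with htdef
    have i1 := congrArg PadicInt.toZMod heq
    simp only [map_add, map_mul, map_pow, map_ofNat,
      show (23 : ZMod 23) = 0 by decide, show (4025 : ZMod 23) = 0 by decide,
      show (279841 : ZMod 23) = 0 by decide,
      zero_mul, mul_zero, add_zero, zero_add] at i1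
    obtain ⟨hY0, hX0⟩ := zmod23_L1 _ _ i1
    obtain ⟨Y₁, hY⟩ := dvd23' hY0
    obtain ⟨X₁, hX⟩ := dvd23' hX0
    subst hY hX
    have e2 : 23 * Y₁ ^ 2 + Z ^ 2 = 60835 * X₁ ^ 4 + 175 * (t * 279841) :=
      mul_left_cancel₀ h23 (by linear_combination heq)
    have i2 := congrArg PadicInt.toZMod e2
    simp only [map_add, map_mul, map_pow, map_ofNat,
      show (23 : ZMod 23) = 0 by decide, show (60835 : ZMod 23) = 0 by decide,
      show (279841 : ZMod 23) = 0 by decide,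
      zero_mul, mul_zero, add_zero, zero_add] at i2
    obtain ⟨Z₁, hZ⟩ := dvd23' (pow_eq_zero_iff (n := 2) (by norm_num) |>.mp i2)
    subst hZ
    have e3 : Y₁ ^ 2 + 23 * Z₁ ^ 2 = 2645 * X₁ ^ 4 + 175 * (t * 12167) :=
      mul_left_cancel₀ h23 (by linear_combination e2)
    have i3 := congrArg PadicInt.toZMod e3
    simp only [map_add, map_mul, map_pow, map_ofNat,
      show (23 : ZMod 23) = 0 by decide, show (2645 : ZMod 23) = 0 by decide,
      show (12167 : ZMod 23) = 0 by decide,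
      zero_mul, mul_zero, add_zero, zero_add] at i3
    obtain ⟨Y₂, hY₂⟩ := dvd23' (pow_eq_zero_iff (n := 2) (by norm_num) |>.mp i3)
    subst hY₂
    have e4 : 23 * Y₂ ^ 2 + Z₁ ^ 2 = 115 * X₁ ^ 4 + 175 * (t * 529) :=
      mul_left_cancel₀ h23 (by linear_combination e3)
    have i4 := congrArg PadicInt.toZMod e4
    simp only [map_add, map_mul, map_pow, map_ofNat,
      show (23 : ZMod 23) = 0 by decide, show (115 : ZMod 23) = 0 by decide,
      show (529 : ZMod 23) = 0 by decide,
      zero_mul, mul_zero, add_zero, zero_add] at i4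
    obtain ⟨Z₂, hZ₂⟩ := dvd23' (pow_eq_zero_iff (n := 2) (by norm_num) |>.mp i4)
    subst hZ₂
    have e5 : Y₂ ^ 2 + 23 * Z₂ ^ 2 = 5 * X₁ ^ 4 + 4025 * 23 ^ (4 * m) :=
      mul_left_cancel₀ h23 (by rw [← htdef]; linear_combination e4)
    exact ih X₁ Y₂ Z₂ e5

lemma norm_scale_exists (q : ℚ_[23]) : ∃ n : ℕ, ‖(23 : ℚ_[23]) ^ n * q‖ ≤ 1 := by
  have hc : ((23 : ℕ) : ℚ_[23]) = (23 : ℚ_[23]) := by norm_cast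
  rcases le_or_gt ‖q‖ 1 with h | h
  · exact ⟨0, by simpa⟩
  · have hq : q ≠ 0 := fun h0 => by rw [h0, norm_zero] at h; linarith
    have hvneg : 0 ≤ -q.valuation := by
      rw [Right.nonneg_neg_iff]
      exact le_of_lt (by
        by_contra hv
        push_neg at hv
        exact absurd (Padic.norm_le_one_iff_val_nonneg q |>.mpr hv) (not_le.mpr h))
    refine ⟨(-q.valuation).toNat, ?_⟩
    have hval : (((-q.valuation).toNat : ℤ)) = -q.valuation := Int.toNat_of_nonneg hvneg
    have hnorm : ‖(23 : ℚ_[23]) ^ (-q.valuation).toNat‖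
        = (23 : ℝ) ^ (-((-q.valuation).toNat : ℤ)) := by
      rw [← hc, Padic.norm_p_pow]
      norm_num
    rw [norm_mul, hnorm, Padic.norm_eq_zpow_neg_valuation hq,
      show (((23:ℕ)):ℝ) = (23:ℝ) from by norm_num,
      ← zpow_add₀ (by norm_num : (23:ℝ) ≠ 0), hval]
    simp

lemma norm_scale_mono (q : ℚ_[23]) {n k : ℕ} (hn : ‖(23 : ℚ_[23]) ^ n * q‖ ≤ 1) (hk : n ≤ k) :
    ‖(23 : ℚ_[23]) ^ k * q‖ ≤ 1 := by
  have hsplit : (23 : ℚ_[23]) ^ k * q = 23 ^ (k - n) * (23 ^ n * q) := by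
    rw [← mul_assoc, ← pow_add]
    congr 2
    omega
  have h1 : ‖(23 : ℚ_[23]) ^ (k - n)‖ ≤ 1 := by
    rw [norm_pow]
    refine pow_le_one₀ (norm_nonneg _) (le_of_lt ?_)
    rw [← show ((23 : ℕ) : ℚ_[23]) = 23 by norm_cast]
    exact Padic.norm_p_lt_one
  calc ‖(23 : ℚ_[23]) ^ k * q‖ = ‖(23:ℚ_[23]) ^ (k-n)‖ * ‖23 ^ n * q‖ := by rw [hsplit, norm_mul]
    _ ≤ 1 * 1 := mul_le_mul h1 hn (norm_nonneg _) zero_le_one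
    _ = 1 := by norm_num

lemma no_q23 : ¬ ∃ x y z : ℚ_[23], y ^ 2 + 23 * z ^ 2 = 5 * (x ^ 4 + 805) := by
  rintro ⟨x, y, z, heq⟩
  obtain ⟨n₁, h₁⟩ := norm_scale_exists x
  obtain ⟨n₂, h₂⟩ := norm_scale_exists y
  obtain ⟨n₃, h₃⟩ := norm_scale_exists z
  set n := max (max n₁ n₂) n₃ with hn
  have hx : ‖(23 : ℚ_[23]) ^ n * x‖ ≤ 1 := norm_scale_mono x h₁ (by omega)
  have hy : ‖(23 : ℚ_[23]) ^ (2 * n) * y‖ ≤ 1 := norm_scale_mono y h₂ (by omega)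
  have hz : ‖(23 : ℚ_[23]) ^ (2 * n) * z‖ ≤ 1 := norm_scale_mono z h₃ (by omega)
  set X : ℤ_[23] := ⟨(23 : ℚ_[23]) ^ n * x, hx⟩ with hX
  set Y : ℤ_[23] := ⟨(23 : ℚ_[23]) ^ (2 * n) * y, hy⟩ with hY
  set Z : ℤ_[23] := ⟨(23 : ℚ_[23]) ^ (2 * n) * z, hz⟩ with hZ
  apply descent23 n X Y Z
  set ψ : ℤ_[23] →+* ℚ_[23] := PadicInt.Coe.ringHom with hψdef
  have hψ : ∀ a : ℤ_[23], ψ a = (a : ℚ_[23]) := fun _ => rfl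
  have hinj : Function.Injective ψ := fun a b h => Subtype.ext h
  apply hinj
  simp only [map_add, map_mul, map_pow, map_ofNat]
  simp only [hψ]
  linear_combination (23 : ℚ_[23]) ^ (4 * n) * heq

lemma aux3 : PadicInt.toZMod (3 : ℤ_[2]) ≠ 0 := by
  rw [show (3:ℤ_[2]) = ((3:ℕ) : ℤ_[2]) by norm_num, map_natCast]
  decide

instance fact5' : Fact (Nat.Prime 5) := ⟨by norm_num⟩
instance fact7' : Fact (Nat.Prime 7) := ⟨by norm_num⟩

lemma aux161 : PadicInt.toZMod (161 : ℤ_[5]) ≠ 0 := by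
  rw [show (161:ℤ_[5]) = ((161:ℕ) : ℤ_[5]) by norm_num, map_natCast]
  decide

lemma aux4030 : PadicInt.toZMod (4030 : ℤ_[7]) ≠ 0 := by
  rw [show (4030:ℤ_[7]) = ((4030:ℕ) : ℤ_[7]) by norm_num, map_natCast]
  decide

end Aux

/-- The Châtelet equation `y² + 23·z² = 5·(x⁴ + 805)` has a real solution and
a `ℚ_p`-solution for every prime `p ≠ 23`, but no `ℚ_23`-solution (hence no rational
solution). -/
theorem stmt_14 :
    (∃ x y z : ℝ, y ^ 2 + 23 * z ^ 2 = 5 * (x ^ 4 + 805)) ∧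
    (∀ (p : ℕ) [Fact p.Prime], p ≠ 23 →
      ∃ x y z : ℚ_[p], y ^ 2 + 23 * z ^ 2 = 5 * (x ^ 4 + 805)) ∧
    (¬ ∃ x y z : ℚ_[23], y ^ 2 + 23 * z ^ 2 = 5 * (x ^ 4 + 805)) ∧
    (¬ ∃ x y z : ℚ, y ^ 2 + 23 * z ^ 2 = 5 * (x ^ 4 + 805)) := by
  refine ⟨⟨0, Real.sqrt 4025, 0, ?_⟩, ?_, no_q23, ?_⟩
  · rw [Real.sq_sqrt (by norm_num : (0:ℝ) ≤ 4025)]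
    norm_num
  · intro p _ hp23
    by_cases hp2 : p = 2
    · subst hp2
      -- Hensel: √(-23) exists in ℤ_2
      obtain ⟨t, ht⟩ : ∃ t : ℤ_[2], t ^ 2 = -23 := by
        have h3 : PadicInt.toZMod (3 : ℤ_[2]) ≠ 0 := aux3
        have h32 : ((3:ℤ_[2]) ^ 2 + 23) = 2 ^ 5 := by norm_num
        have hnorm1 : ‖((3:ℤ_[2]) ^ 2 + 23)‖ = (2:ℝ)⁻¹ ^ 5 := by
          rw [h32, norm_pow, show ((2:ℤ_[2])) = ((2:ℕ) : ℤ_[2]) by norm_num,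
            PadicInt.norm_p]
          norm_num
        have hnorm2 : ‖((2:ℤ_[2]) * 3)‖ = (2:ℝ)⁻¹ := by
          rw [show ((2:ℤ_[2])) = ((2:ℕ) : ℤ_[2]) by norm_num, norm_mul,
            PadicInt.norm_p, norm_eq_one_of_toZMod' _ h3, mul_one]
          norm_num
        have hFa : (Polynomial.X ^ 2 + Polynomial.C (23 : ℤ_[2])).eval 3 = 3 ^ 2 + 23 := by
          simp
        have hF'a : ((Polynomial.X ^ 2 + Polynomial.C (23 : ℤ_[2])).derivative).eval 3
            = 2 * 3 := by
          simp [one_add_one_eq_two]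
        obtain ⟨r, hr, -⟩ := hensels_lemma
          (F := Polynomial.X ^ 2 + Polynomial.C (23 : ℤ_[2])) (a := 3) (by
            show ‖(Polynomial.X ^ 2 + Polynomial.C (23 : ℤ_[2])).eval 3‖ <
              ‖((Polynomial.X ^ 2 + Polynomial.C (23 : ℤ_[2])).derivative).eval 3‖ ^ 2
            rw [hFa, hF'a, hnorm1, hnorm2]
            norm_num)
        refine ⟨r, ?_⟩
        have hr' : r ^ 2 + 23 = 0 := by simpa using hr
        linear_combination hr'
      have ht' : ((t : ℚ_[2])) ^ 2 = -23 := by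
        have := congrArg (PadicInt.Coe.ringHom : ℤ_[2] →+* ℚ_[2]) ht
        simp only [map_pow, map_neg, map_ofNat] at this; exact this
      have ht0 : (t : ℚ_[2]) ≠ 0 := by
        intro h0
        rw [h0] at ht'
        norm_num at ht'
      refine ⟨0, 2013, 2012 / (t : ℚ_[2]), ?_⟩
      field_simp
      linear_combination (2013 ^ 2 - 4025) * ht'
    · -- p odd
      by_cases hp5 : p = 5
      · subst hp5
        obtain ⟨y, z, hyz⟩ := rep_unit' (by norm_num) (by norm_num) (161 : ℤ_[5]) aux161
        refine ⟨0, 5 * (y : ℚ_[5]), 5 * (z : ℚ_[5]), ?_⟩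
        have hc : ((y : ℚ_[5])) ^ 2 + 23 * ((z : ℚ_[5])) ^ 2 = 161 := by
          have := congrArg (PadicInt.Coe.ringHom : ℤ_[5] →+* ℚ_[5]) hyz
          simp only [map_add, map_mul, map_pow, map_ofNat] at this; exact this
        linear_combination (25 : ℚ_[5]) * hc
      · by_cases hp7 : p = 7
        · subst hp7
          obtain ⟨y, z, hyz⟩ := rep_unit' (by norm_num) (by norm_num) (4030 : ℤ_[7]) aux4030
          refine ⟨1, (y : ℚ_[7]), (z : ℚ_[7]), ?_⟩
          have hc : ((y : ℚ_[7])) ^ 2 + 23 * ((z : ℚ_[7])) ^ 2 = 4030 := by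
            have := congrArg (PadicInt.Coe.ringHom : ℤ_[7] →+* ℚ_[7]) hyz
            simp only [map_add, map_mul, map_pow, map_ofNat] at this; exact this
          rw [hc]; norm_num
        · have hp : p.Prime := Fact.out
          have hc0 : PadicInt.toZMod (4025 : ℤ_[p]) ≠ 0 := by
            rw [map_ofNat]
            intro h
            have h' : ((4025 : ℕ) : ZMod p) = 0 := by simpa using h
            rw [ZMod.natCast_eq_zero_iff] at h'
            have h5 : p ∣ 5 * (5 * (7 * 23)) := by norm_num at h' ⊢; exact h'
            rcases (hp.dvd_mul).mp h5 with h | h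
            · exact hp5 ((Nat.prime_dvd_prime_iff_eq hp (by norm_num)).mp h)
            rcases (hp.dvd_mul).mp h with h | h
            · exact hp5 ((Nat.prime_dvd_prime_iff_eq hp (by norm_num)).mp h)
            rcases (hp.dvd_mul).mp h with h | h
            · exact hp7 ((Nat.prime_dvd_prime_iff_eq hp (by norm_num)).mp h)
            · exact hp23 ((Nat.prime_dvd_prime_iff_eq hp (by norm_num)).mp h)
          obtain ⟨y, z, hyz⟩ := rep_unit' hp2 hp23 (4025 : ℤ_[p]) hc0
          refine ⟨0, (y : ℚ_[p]), (z : ℚ_[p]), ?_⟩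
          have hc : ((y : ℚ_[p])) ^ 2 + 23 * ((z : ℚ_[p])) ^ 2 = 4025 := by
            have := congrArg (PadicInt.Coe.ringHom : ℤ_[p] →+* ℚ_[p]) hyz
            simp only [map_add, map_mul, map_pow, map_ofNat] at this; exact this
          rw [hc]; norm_num
  · rintro ⟨x, y, z, h⟩
    apply no_q23
    refine ⟨(x : ℚ_[23]), (y : ℚ_[23]), (z : ℚ_[23]), ?_⟩
    exact_mod_cast h
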